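/- Let e be an empirical model with a WPS representation e†. If e is probabilistically contextual, then every monotonic extension (Y, Σ', μ') of e† violates additivity: there exists a finite collection V ⊆ Σ' of pairwise disjoint sets with ∪V ∈ Σ' and μ'(∪V) ≠ Σ_{A∈V} μ'(A). -/
import Mathlib


open MeasureTheory


/-- A section (event) over a finite set of measurements `U`: an assignment of an
outcome to each measurement in `U`. -/
abbrev Sec {X : Type*} (U : Finset X) (O : Type*) := {x : X // x ∈ U} → O

/-- Restriction of a section over `V` to a subset `U ⊆ V`. -/
def resSec {X O : Type*} {U V : Finset X} (h : U ⊆ V) (s : Sec V O) : Sec U O :=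
  fun x => s ⟨x.1, h x.2⟩

/-- The section over the singleton `{x}` induced by a section over `U ∋ x`. -/
def singleSec {X O : Type*} {U : Finset X} (x : X) (hx : x ∈ U) (s : Sec U O) :
    Sec ({x} : Finset X) O := fun _ => s ⟨x, hx⟩

/-- Restriction of a global section `s : X → O` to a context `C`. -/
def restrictGlobal {X O : Type*} (s : X → O) (C : Finset X) : Sec C O := fun x => s x.1

/-- Marginalization of the distribution `e C` to a subcontext `U ⊆ C`. -/
def margin {X O : Type*} [Fintype X] [DecidableEq X] [Fintype O] [DecidableEq O]
    (e : (C : Finset X) → Sec C O → ℝ) (C U : Finset X) (hU : U ⊆ C) (s : Sec U O) : ℝ :=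
  ∑ t ∈ Finset.univ.filter (fun t : Sec C O => resSec hU t = s), e C t

/-- An empirical model on the scenario `(X, M, O)`: `M` covers `X`, each `e C` for
`C ∈ M` is a probability distribution on sections over `C`, and the family satisfies
the compatibility (generalized no-signaling) condition. -/
def IsEmpiricalModel {X O : Type*} [Fintype X] [DecidableEq X] [Fintype O] [DecidableEq O]
    (M : Finset (Finset X)) (e : (C : Finset X) → Sec C O → ℝ) : Prop :=
  (∀ x : X, ∃ C ∈ M, x ∈ C) ∧
  (∀ C ∈ M, (∀ t : Sec C O, 0 ≤ e C t) ∧ ∑ t : Sec C O, e C t = 1) ∧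
  (∀ C ∈ M, ∀ C' ∈ M, ∀ t : Sec ((C ∩ C') : Finset X) O,
    margin e C (C ∩ C') Finset.inter_subset_left t
      = margin e C' (C ∩ C') Finset.inter_subset_right t)

/-- A global section consistent with the support of the model. -/
def ConsistentGlobal {X O : Type*} (M : Finset (Finset X))
    (e : (C : Finset X) → Sec C O → ℝ) (s : X → O) : Prop :=
  ∀ C ∈ M, e C (restrictGlobal s C) ≠ 0

/-- Strong contextuality: no global section is consistent with the support. -/
def StronglyContextual {X O : Type*} (M : Finset (Finset X))
    (e : (C : Finset X) → Sec C O → ℝ) : Prop :=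
  ¬ ∃ s : X → O, ConsistentGlobal M e s

/-- Logical contextuality: some section in the support of some `e C` does not extend
to a global section consistent with the support. -/
def LogicallyContextual {X O : Type*} (M : Finset (Finset X))
    (e : (C : Finset X) → Sec C O → ℝ) : Prop :=
  ∃ C ∈ M, ∃ t : Sec C O, e C t ≠ 0 ∧
    ¬ ∃ s : X → O, restrictGlobal s C = t ∧ ConsistentGlobal M e s

/-- Probabilistic contextuality: no global distribution marginalizes to every `e C`. -/
def ProbabilisticallyContextual {X O : Type*} [Fintype X] [DecidableEq X]
    [Fintype O] [DecidableEq O] (M : Finset (Finset X))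
    (e : (C : Finset X) → Sec C O → ℝ) : Prop :=
  ¬ ∃ d : (X → O) → ℝ, (∀ s, 0 ≤ d s) ∧ (∑ s, d s = 1) ∧
    ∀ C ∈ M, ∀ t : Sec C O,
      (∑ s ∈ Finset.univ.filter (fun s : X → O => restrictGlobal s C = t), d s) = e C t




/-- The σ-algebra on `Y` generated by the representations of singleton events over
measurements in a context `C` (for finitely many generators this coincides with the
generated algebra `Σ_C`). -/
def genCtx {X O Y : Type*} (Ebar : (U : Finset X) → Sec U O → Set Y)
    (C : Finset X) : MeasurableSpace Y :=
  MeasurableSpace.generateFrom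
    {S | ∃ x ∈ C, ∃ s : Sec ({x} : Finset X) O, S = Ebar {x} s}

/-- The set `Σ` of WPS events: the union of the algebras `Σ_C` over contexts `C ∈ M`. -/
def SigmaOf {X O Y : Type*} (M : Finset (Finset X))
    (Ebar : (U : Finset X) → Sec U O → Set Y) : Set (Set Y) :=
  {A | ∃ C ∈ M, MeasurableSet[genCtx Ebar C] A}

/-- A WPS representation `e† = (E†, Σ, μ)` of an empirical model `e`: an injective
event transfer map satisfying the gluing condition and nonemptiness, with a set
function `μ` satisfying Weak Classicality (WC), Empirical Consistency (EC) and
Mutual Exclusivity (ME). -/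
structure WPSRep {X O : Type*} [Fintype X] [DecidableEq X] [Fintype O] [DecidableEq O]
    (M : Finset (Finset X)) (e : (C : Finset X) → Sec C O → ℝ) (Y : Type*) where
  Ebar : (U : Finset X) → Sec U O → Set Y
  mu : Set Y → ℝ
  inj : ∀ U : Finset X, Function.Injective (Ebar U)
  glue : ∀ (U : Finset X) (s : Sec U O),
    Ebar U s = ⋂ (x : X), ⋂ (hx : x ∈ U), Ebar {x} (singleSec x hx s)
  nonempty : ∀ (U : Finset X) (s : Sec U O), (Ebar U s).Nonempty
  wc_univ : mu Set.univ = 1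
  wc_nonneg : ∀ C ∈ M, ∀ A : Set Y, MeasurableSet[genCtx Ebar C] A → 0 ≤ mu A
  wc_le_one : ∀ C ∈ M, ∀ A : Set Y, MeasurableSet[genCtx Ebar C] A → mu A ≤ 1
  wc_add : ∀ C ∈ M, ∀ A B : Set Y, MeasurableSet[genCtx Ebar C] A →
    MeasurableSet[genCtx Ebar C] B → Disjoint A B → mu (A ∪ B) = mu A + mu B
  ec : ∀ C ∈ M, ∀ (U : Finset X) (hU : U ⊆ C) (s : Sec U O),
    mu (Ebar U s) = margin e C U hU s
  me : ∀ (U : Finset X) (s s' : Sec U O), s ≠ s' → mu (Ebar U s ∩ Ebar U s') = 0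

/-- A combinatorial WPS representation: additionally satisfies Strong Mutual
Exclusivity and Exhaustiveness. -/
structure ComboWPSRep {X O : Type*} [Fintype X] [DecidableEq X] [Fintype O] [DecidableEq O]
    (M : Finset (Finset X)) (e : (C : Finset X) → Sec C O → ℝ) (Y : Type*)
    extends WPSRep M e Y where
  sme : ∀ (U : Finset X) (s s' : Sec U O), s ≠ s' → Ebar U s ∩ Ebar U s' = ∅
  exh : ∀ U : Finset X, (⋃ s : Sec U O, Ebar U s) = Set.univ

/-- The collection `V_M` of representations of events over maximal contexts. -/
def VMSet {X O Y : Type*} (M : Finset (Finset X))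
    (Ebar : (U : Finset X) → Sec U O → Set Y) : Set (Set Y) :=
  {A | ∃ C ∈ M, ∃ s : Sec C O, A = Ebar C s}

/-- A monotonic extension `(Y, Σ', μ')` of a WPS `(Y, Σ, μ)`: `Σ'` contains the
algebra generated by `Σ`, `μ'` restricts to `μ` on `Σ`, is monotone, and takes
values in `[0,1]`. -/
structure MonExt {Y : Type*} (Sigma : Set (Set Y)) (mu : Set Y → ℝ)
    (Sigma' : Set (Set Y)) (mu' : Set Y → ℝ) : Prop where
  sub : Sigma ⊆ Sigma'
  univ_mem : Set.univ ∈ Sigma'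
  compl_mem : ∀ A ∈ Sigma', Aᶜ ∈ Sigma'
  union_mem : ∀ A ∈ Sigma', ∀ B ∈ Sigma', A ∪ B ∈ Sigma'
  restricts : ∀ A ∈ Sigma, mu' A = mu A
  mono : ∀ A ∈ Sigma', ∀ B ∈ Sigma', A ⊆ B → mu' A ≤ mu' B
  nonneg : ∀ A ∈ Sigma', 0 ≤ mu' A
  le_one : ∀ A ∈ Sigma', mu' A ≤ 1



/-- Auxiliary: a finite-additivity system on a family of sets. -/
structure AddSys {Y : Type*} (S : Set (Set Y)) (m : Set Y → ℝ) : Prop where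
  univ_mem : Set.univ ∈ S
  compl_mem : ∀ A ∈ S, Aᶜ ∈ S
  union_mem : ∀ A ∈ S, ∀ B ∈ S, A ∪ B ∈ S
  mono : ∀ A ∈ S, ∀ B ∈ S, A ⊆ B → m A ≤ m B
  nonneg : ∀ A ∈ S, 0 ≤ m A
  le_one : ∀ A ∈ S, m A ≤ 1
  empty : m ∅ = 0
  add : ∀ A ∈ S, ∀ B ∈ S, Disjoint A B → m (A ∪ B) = m A + m B

namespace AddSys

variable {Y : Type*} {S : Set (Set Y)} {m : Set Y → ℝ} (h : AddSys S m)
include h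

lemma empty_mem : (∅ : Set Y) ∈ S := by
  simpa using h.compl_mem _ h.univ_mem

lemma inter_mem {A B : Set Y} (hA : A ∈ S) (hB : B ∈ S) : A ∩ B ∈ S := by
  have := h.compl_mem _ (h.union_mem _ (h.compl_mem _ hA) _ (h.compl_mem _ hB))
  simpa [Set.compl_union] using this

lemma diff_mem {A B : Set Y} (hA : A ∈ S) (hB : B ∈ S) : A \ B ∈ S := by
  rw [Set.diff_eq]; exact h.inter_mem hA (h.compl_mem _ hB)

lemma union_split {A B : Set Y} (hA : A ∈ S) (hB : B ∈ S) :
    m (A ∪ B) = m A + m (B \ A) := by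
  rw [← Set.union_diff_self]
  exact h.add _ hA _ (h.diff_mem hB hA) disjoint_sdiff_self_right

lemma inter_split {A B : Set Y} (hA : A ∈ S) (hB : B ∈ S) :
    m B = m (A ∩ B) + m (B \ A) := by
  have h1 : (A ∩ B) ∪ (B \ A) = B := by
    rw [Set.inter_comm]; exact Set.inter_union_diff B A
  have h2 : Disjoint (A ∩ B) (B \ A) :=
    disjoint_sdiff_self_right.mono_left Set.inter_subset_left
  conv_lhs => rw [← h1]
  exact h.add _ (h.inter_mem hA hB) _ (h.diff_mem hB hA) h2

lemma subadd {A B : Set Y} (hA : A ∈ S) (hB : B ∈ S) :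
    m (A ∪ B) ≤ m A + m B := by
  have h1 := h.union_split hA hB
  have h2 := h.mono _ (h.diff_mem hB hA) _ hB Set.diff_subset
  linarith

lemma inter_ge {A B : Set Y} (hA : A ∈ S) (hB : B ∈ S) :
    m A + m B - m (A ∪ B) = m (A ∩ B) := by
  have h1 := h.union_split hA hB
  have h2 := h.inter_split hA hB
  linarith

lemma null_add {A B : Set Y} (hA : A ∈ S) (hB : B ∈ S) (h0 : m (A ∩ B) = 0) :
    m (A ∪ B) = m A + m B := by
  have := h.inter_ge hA hB; linarith

lemma biUnion_mem {ι : Type*} (T : Finset ι) (f : ι → Set Y)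
    (hf : ∀ i ∈ T, f i ∈ S) : (⋃ i ∈ T, f i) ∈ S := by
  classical
  induction T using Finset.induction_on with
  | empty => simpa using h.empty_mem
  | @insert a T ha ih =>
    rw [Finset.set_biUnion_insert]
    exact h.union_mem _ (hf a (Finset.mem_insert_self a T)) _
      (ih fun i hi => hf i (Finset.mem_insert_of_mem hi))

lemma iInter_mem {ι : Type*} [Fintype ι] (f : ι → Set Y)
    (hf : ∀ i, f i ∈ S) : (⋂ i, f i) ∈ S := by
  have key : (⋂ i, f i) = (⋃ i ∈ (Finset.univ : Finset ι), (f i)ᶜ)ᶜ := by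
    ext y; simp
  rw [key]
  exact h.compl_mem _ (h.biUnion_mem _ _ fun i _ => h.compl_mem _ (hf i))

lemma biUnion_null {ι : Type*} (T : Finset ι) (f : ι → Set Y)
    (hf : ∀ i ∈ T, f i ∈ S) (h0 : ∀ i ∈ T, m (f i) = 0) :
    m (⋃ i ∈ T, f i) = 0 := by
  classical
  induction T using Finset.induction_on with
  | empty => simpa using h.empty
  | @insert a T ha ih =>
    have hmem : (⋃ i ∈ T, f i) ∈ S :=
      h.biUnion_mem _ _ fun i hi => hf i (Finset.mem_insert_of_mem hi)
    have h1 : m (f a ∪ ⋃ i ∈ T, f i) ≤ m (f a) + m (⋃ i ∈ T, f i) :=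
      h.subadd (hf a (Finset.mem_insert_self a T)) hmem
    have h2 := ih (fun i hi => hf i (Finset.mem_insert_of_mem hi))
      (fun i hi => h0 i (Finset.mem_insert_of_mem hi))
    have h3 := h0 a (Finset.mem_insert_self a T)
    have h4 : 0 ≤ m (⋃ i ∈ insert a T, f i) :=
      h.nonneg _ (h.biUnion_mem _ _ hf)
    rw [Finset.set_biUnion_insert] at *
    linarith

lemma addNull {ι : Type*} (T : Finset ι) (f : ι → Set Y)
    (hf : ∀ i ∈ T, f i ∈ S)
    (hn : ∀ i ∈ T, ∀ j ∈ T, i ≠ j → m (f i ∩ f j) = 0) :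
    m (⋃ i ∈ T, f i) = ∑ i ∈ T, m (f i) := by
  classical
  induction T using Finset.induction_on with
  | empty => simpa using h.empty
  | @insert a T ha ih =>
    have hfa := hf a (Finset.mem_insert_self a T)
    have hfT : ∀ i ∈ T, f i ∈ S := fun i hi => hf i (Finset.mem_insert_of_mem hi)
    have hmem : (⋃ i ∈ T, f i) ∈ S := h.biUnion_mem _ _ hfT
    have hnull : m (f a ∩ ⋃ i ∈ T, f i) = 0 := by
      have hkey : f a ∩ (⋃ i ∈ T, f i) = ⋃ i ∈ T, (f a ∩ f i) := by
        rw [Set.inter_iUnion₂]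
      rw [hkey]
      refine h.biUnion_null _ _ (fun i hi => h.inter_mem hfa (hfT i hi)) ?_
      intro i hi
      exact hn a (Finset.mem_insert_self a T) i (Finset.mem_insert_of_mem hi)
        (fun hh => ha (hh ▸ hi))
    rw [Finset.set_biUnion_insert, h.null_add hfa hmem hnull, Finset.sum_insert ha,
      ih hfT (fun i hi j hj hij => hn i (Finset.mem_insert_of_mem hi) j
        (Finset.mem_insert_of_mem hj) hij)]

lemma biInter_one (h1 : m Set.univ = 1) {ι : Type*} (T : Finset ι) (f : ι → Set Y)
    (hf : ∀ i ∈ T, f i ∈ S) (ho : ∀ i ∈ T, m (f i) = 1) :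
    (⋂ i ∈ T, f i) ∈ S ∧ m (⋂ i ∈ T, f i) = 1 := by
  classical
  induction T using Finset.induction_on with
  | empty => simpa using ⟨h.univ_mem, h1⟩
  | @insert a T ha ih =>
    have hfa := hf a (Finset.mem_insert_self a T)
    obtain ⟨hmemT, honeT⟩ := ih (fun i hi => hf i (Finset.mem_insert_of_mem hi))
      (fun i hi => ho i (Finset.mem_insert_of_mem hi))
    have hmem : (⋂ i ∈ insert a T, f i) ∈ S := by
      rw [Finset.set_biInter_insert]; exact h.inter_mem hfa hmemT
    refine ⟨hmem, ?_⟩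
    have hig := h.inter_ge hfa hmemT
    have hle := h.le_one _ (h.union_mem _ hfa _ hmemT)
    have hle2 := h.le_one _ hmem
    rw [Finset.set_biInter_insert] at hle2 ⊢
    have hoa := ho a (Finset.mem_insert_self a T)
    linarith

end AddSys


/-- Marginalizing a context to itself is the identity. -/
lemma margin_self {X O : Type*} [Fintype X] [DecidableEq X] [Fintype O] [DecidableEq O]
    (e : (C : Finset X) → Sec C O → ℝ) (C : Finset X) (hU : C ⊆ C) (t : Sec C O) :
    margin e C C hU t = e C t := by
  unfold margin
  have hres : ∀ u : Sec C O, resSec hU u = u := fun u => rfl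
  simp only [hres, Finset.filter_eq', Finset.mem_univ, if_true, Finset.sum_singleton]


/-- **Theorem 1.3.** If the empirical model `e` is probabilistically contextual, then
every monotonic extension `(Y, Σ', μ')` of any of its WPS representations `e†`
violates additivity: there is a finite collection `V ⊆ Σ'` of pairwise disjoint sets
with `∪V ∈ Σ'` and `μ'(∪V) ≠ ∑_{A ∈ V} μ'(A)`. -/
theorem probabilistically_contextual_monotonic_extension_violates_additivity
    {X O Y : Type*} [Fintype X] [DecidableEq X] [Fintype O] [DecidableEq O]
    (M : Finset (Finset X)) (e : (C : Finset X) → Sec C O → ℝ)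
    (hmodel : IsEmpiricalModel M e)
    (W : WPSRep M e Y)
    (h : ProbabilisticallyContextual M e) :
    ∀ (Sigma' : Set (Set Y)) (mu' : Set Y → ℝ),
      MonExt (SigmaOf M W.Ebar) W.mu Sigma' mu' →
      ∃ V : Finset (Set Y), ↑V ⊆ Sigma' ∧
        (∀ A ∈ V, ∀ B ∈ V, A ≠ B → Disjoint A B) ∧
        ⋃₀ (V : Set (Set Y)) ∈ Sigma' ∧
        mu' (⋃₀ (V : Set (Set Y))) ≠ ∑ A ∈ V, mu' A := by
  classical
  intro Sigma' mu' hext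
  by_contra hcon
  push_neg at hcon
  by_cases hM : ∃ C, C ∈ M
  swap
  · -- degenerate case: X is empty
    haveI hXempty : IsEmpty X := ⟨fun x => by
      obtain ⟨C, hC, -⟩ := hmodel.1 x
      exact hM ⟨C, hC⟩⟩
    apply h
    refine ⟨fun _ => (1 : ℝ), fun _ => zero_le_one, ?_, ?_⟩
    · have hcard : Fintype.card (X → O) = 1 := by
        simp [Fintype.card_fun]
      simp [Finset.sum_const, Finset.card_univ, hcard]
    · intro C hC
      exact absurd ⟨C, hC⟩ hM
  obtain ⟨C0, hC0⟩ := hM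
  obtain ⟨y0, -⟩ := W.nonempty ∅ (fun z => absurd z.2 (Finset.notMem_empty z.1))
  have hempty_mem : (∅ : Set Y) ∈ Sigma' := by
    simpa using hext.compl_mem _ hext.univ_mem
  -- pairwise additivity from the negation of the conclusion
  have hpair : ∀ A ∈ Sigma', ∀ B ∈ Sigma', A ≠ B → Disjoint A B →
      mu' (A ∪ B) = mu' A + mu' B := by
    intro A hA B hB hAB hD
    have hsub : ↑({A, B} : Finset (Set Y)) ⊆ Sigma' := by
      intro Z hZ
      simp only [Finset.coe_insert, Finset.coe_singleton, Set.mem_insert_iff,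
        Set.mem_singleton_iff] at hZ
      rcases hZ with rfl | rfl
      · exact hA
      · exact hB
    have hdis : ∀ Z1 ∈ ({A, B} : Finset (Set Y)), ∀ Z2 ∈ ({A, B} : Finset (Set Y)),
        Z1 ≠ Z2 → Disjoint Z1 Z2 := by
      intro Z1 h1 Z2 h2 h12
      simp only [Finset.mem_insert, Finset.mem_singleton] at h1 h2
      rcases h1 with rfl | rfl <;> rcases h2 with rfl | rfl
      · exact absurd rfl h12
      · exact hD
      · exact hD.symm
      · exact absurd rfl h12
    have hU : ⋃₀ (({A, B} : Finset (Set Y)) : Set (Set Y)) = A ∪ B := by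
      simp
    have hV := hcon {A, B} hsub hdis (by rw [hU]; exact hext.union_mem _ hA _ hB)
    rw [hU, Finset.sum_pair hAB] at hV
    exact hV
  have hmu0 : mu' (∅ : Set Y) = 0 := by
    have hne : (Set.univ : Set Y) ≠ (∅ : Set Y) := by
      intro hh
      exact (Set.eq_empty_iff_forall_notMem.mp hh) y0 trivial
    have hd : Disjoint (Set.univ : Set Y) (∅ : Set Y) := by simp
    have := hpair Set.univ hext.univ_mem ∅ hempty_mem hne hd
    simp only [Set.union_empty] at this
    linarith
  have hAS : AddSys Sigma' mu' := by
    refine ⟨hext.univ_mem, hext.compl_mem, hext.union_mem, hext.mono, hext.nonneg,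
      hext.le_one, hmu0, ?_⟩
    intro A hA B hB hD
    by_cases hAB : A = B
    · subst hAB
      have hAe : A = ∅ := by simpa using disjoint_self.mp hD
      rw [hAe]
      simp [hmu0]
    · exact hpair A hA B hB hAB hD
  -- the gluing condition in membership form
  have hglue : ∀ (U : Finset X) (u : Sec U O) (y : Y),
      y ∈ W.Ebar U u ↔ ∀ (x : X) (hx : x ∈ U), y ∈ W.Ebar {x} (singleSec x hx u) := by
    intro U u y
    rw [W.glue]
    simp only [Set.mem_iInter]
  have hgen : ∀ (C : Finset X) (x : X), x ∈ C → ∀ t : Sec ({x} : Finset X) O,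
      MeasurableSet[genCtx W.Ebar C] (W.Ebar {x} t) := by
    intro C x hx t
    exact MeasurableSpace.measurableSet_generateFrom ⟨x, hx, t, rfl⟩
  have hsingle : ∀ (x : X) (t : Sec ({x} : Finset X) O),
      W.Ebar {x} t ∈ SigmaOf M W.Ebar := by
    intro x t
    obtain ⟨C, hC, hxC⟩ := hmodel.1 x
    exact ⟨C, hC, MeasurableSpace.measurableSet_generateFrom ⟨x, hxC, t, rfl⟩⟩
  have hsingle' : ∀ x t, W.Ebar {x} t ∈ Sigma' := fun x t => hext.sub (hsingle x t)
  have hpairnull : ∀ (x : X) (t t' : Sec ({x} : Finset X) O), t ≠ t' →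
      W.Ebar {x} t ∩ W.Ebar {x} t' ∈ SigmaOf M W.Ebar ∧
      mu' (W.Ebar {x} t ∩ W.Ebar {x} t') = 0 := by
    intro x t t' htt
    obtain ⟨C, hC, hxC⟩ := hmodel.1 x
    have hmem : W.Ebar {x} t ∩ W.Ebar {x} t' ∈ SigmaOf M W.Ebar :=
      ⟨C, hC, (hgen C x hxC t).inter (hgen C x hxC t')⟩
    exact ⟨hmem, by rw [hext.restricts _ hmem]; exact W.me {x} t t' htt⟩
  set G : (X → O) → Set Y := fun s => W.Ebar Finset.univ (restrictGlobal s Finset.univ)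
    with hGdef
  have hGsingle : ∀ (s : X → O) (x : X), G s ⊆ W.Ebar {x} (fun _ => s x) := by
    intro s x y hy
    exact (hglue _ _ y).1 hy x (Finset.mem_univ x)
  have hGiInter : ∀ s : X → O, G s = ⋂ x : X, W.Ebar {x} (fun _ => s x) := by
    intro s
    ext y
    constructor
    · intro hy
      exact Set.mem_iInter.mpr fun x => hGsingle s x hy
    · intro hy
      refine (hglue _ _ y).2 fun x hx => ?_
      exact Set.mem_iInter.mp hy x
  have hGmem : ∀ s : X → O, G s ∈ Sigma' := by
    intro s
    rw [hGiInter s]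
    exact hAS.iInter_mem _ fun x => hsingle' x _
  have hGnull : ∀ s s' : X → O, s ≠ s' → mu' (G s ∩ G s') = 0 := by
    intro s s' hss
    have hx : ∃ x, s x ≠ s' x := by
      by_contra hh; push_neg at hh; exact hss (funext hh)
    obtain ⟨x, hx⟩ := hx
    have htt : (fun _ => s x : Sec ({x} : Finset X) O) ≠ (fun _ => s' x) := by
      intro hh
      exact hx (congrFun hh ⟨x, Finset.mem_singleton_self x⟩)
    obtain ⟨hmem, hnull⟩ := hpairnull x _ _ htt
    have hsub : G s ∩ G s' ⊆ W.Ebar {x} (fun _ => s x) ∩ W.Ebar {x} (fun _ => s' x) :=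
      Set.inter_subset_inter (hGsingle s x) (hGsingle s' x)
    have hm1 : G s ∩ G s' ∈ Sigma' := hAS.inter_mem (hGmem s) (hGmem s')
    have h1 := hext.mono _ hm1 _ (hext.sub hmem) hsub
    have h2 := hext.nonneg _ hm1
    rw [hnull] at h1
    linarith
  have hECmem : ∀ (C : Finset X), C ∈ M → ∀ t : Sec C O,
      W.Ebar C t ∈ SigmaOf M W.Ebar := by
    intro C hC t
    refine ⟨C, hC, ?_⟩
    rw [W.glue]
    exact MeasurableSet.iInter fun x => MeasurableSet.iInter fun hx =>
      MeasurableSpace.measurableSet_generateFrom ⟨x, hx, _, rfl⟩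
  have hmuEC : ∀ (C : Finset X), C ∈ M → ∀ t : Sec C O, mu' (W.Ebar C t) = e C t := by
    intro C hC t
    rw [hext.restricts _ (hECmem C hC t), W.ec C hC C (subset_refl C) t,
      margin_self e C (subset_refl C) t]
  have hGC : ∀ (s : X → O) (C : Finset X), G s ⊆ W.Ebar C (restrictGlobal s C) := by
    intro s C y hy
    refine (hglue _ _ y).2 fun x hx => ?_
    exact hGsingle s x hy
  have hGCnull : ∀ (C : Finset X), C ∈ M → ∀ (t : Sec C O) (s : X → O),
      restrictGlobal s C ≠ t → mu' (G s ∩ W.Ebar C t) = 0 := by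
    intro C hC t s hst
    have hx : ∃ x, ∃ hx : x ∈ C, s x ≠ t ⟨x, hx⟩ := by
      by_contra hh; push_neg at hh
      exact hst (funext fun z => hh z.1 z.2)
    obtain ⟨x, hxC, hne⟩ := hx
    have htt : (fun _ => s x : Sec ({x} : Finset X) O) ≠ singleSec x hxC t := by
      intro hh
      exact hne (congrFun hh ⟨x, Finset.mem_singleton_self x⟩)
    have hmem : W.Ebar {x} (fun _ => s x) ∩ W.Ebar {x} (singleSec x hxC t) ∈
        SigmaOf M W.Ebar :=
      ⟨C, hC, (hgen C x hxC _).inter (hgen C x hxC _)⟩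
    have hnull : mu' (W.Ebar {x} (fun _ => s x) ∩ W.Ebar {x} (singleSec x hxC t)) = 0 := by
      rw [hext.restricts _ hmem]
      exact W.me {x} _ _ htt
    have hsub : G s ∩ W.Ebar C t ⊆
        W.Ebar {x} (fun _ => s x) ∩ W.Ebar {x} (singleSec x hxC t) :=
      Set.inter_subset_inter (hGsingle s x) (fun y hy => (hglue C t y).1 hy x hxC)
    have hm1 : G s ∩ W.Ebar C t ∈ Sigma' :=
      hAS.inter_mem (hGmem s) (hext.sub (hECmem C hC t))
    have h1 := hext.mono _ hm1 _ (hext.sub hmem) hsub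
    have h2 := hext.nonneg _ hm1
    rw [hnull] at h1
    linarith
  -- the full-range sets R_x
  have hRxmem : ∀ x : X, (⋃ t : Sec ({x} : Finset X) O, W.Ebar {x} t) ∈ SigmaOf M W.Ebar := by
    intro x
    obtain ⟨C, hC, hxC⟩ := hmodel.1 x
    exact ⟨C, hC, MeasurableSet.iUnion fun t =>
      MeasurableSpace.measurableSet_generateFrom ⟨x, hxC, t, rfl⟩⟩
  have hRxone : ∀ x : X, mu' (⋃ t : Sec ({x} : Finset X) O, W.Ebar {x} t) = 1 := by
    intro x
    obtain ⟨C, hC, hxC⟩ := hmodel.1 x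
    have hsub1 : ({x} : Finset X) ⊆ C := Finset.singleton_subset_iff.mpr hxC
    have heq : (⋃ t : Sec ({x} : Finset X) O, W.Ebar {x} t)
        = ⋃ t ∈ (Finset.univ : Finset (Sec ({x} : Finset X) O)), W.Ebar {x} t := by
      simp
    rw [heq, hAS.addNull _ _ (fun t _ => hsingle' x t)
      (fun t _ t' _ htt => (hpairnull x t t' htt).2)]
    have hval : ∀ t : Sec ({x} : Finset X) O,
        mu' (W.Ebar {x} t) = margin e C {x} hsub1 t := by
      intro t
      rw [hext.restricts _ (hsingle x t)]
      exact W.ec C hC {x} hsub1 t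
    rw [Finset.sum_congr rfl fun t _ => hval t]
    unfold margin
    rw [Finset.sum_fiberwise Finset.univ (resSec hsub1) (e C)]
    exact (hmodel.2.1 C hC).2
  have huniv1 : mu' (Set.univ : Set Y) = 1 := by
    rw [hext.restricts _ ⟨C0, hC0, MeasurableSet.univ⟩]
    exact W.wc_univ
  have hRR := hAS.biInter_one huniv1 (Finset.univ : Finset X)
    (fun x : X => ⋃ t : Sec ({x} : Finset X) O, W.Ebar {x} t)
    (fun x _ => hext.sub (hRxmem x)) (fun x _ => hRxone x)
  obtain ⟨hRmem, hRone⟩ := hRR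
  have hRsub : (⋂ x ∈ (Finset.univ : Finset X), ⋃ t : Sec ({x} : Finset X) O, W.Ebar {x} t)
      ⊆ ⋃ s : X → O, G s := by
    intro y hy
    have hy' : ∀ x : X, ∃ t : Sec ({x} : Finset X) O, y ∈ W.Ebar {x} t := by
      intro x
      have h1 : y ∈ ⋃ t : Sec ({x} : Finset X) O, W.Ebar {x} t :=
        Set.mem_iInter.mp (Set.mem_iInter.mp hy x) (Finset.mem_univ x)
      exact Set.mem_iUnion.mp h1
    choose Tf hTf using hy'
    refine Set.mem_iUnion.mpr ⟨fun x => Tf x ⟨x, Finset.mem_singleton_self x⟩, ?_⟩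
    refine (hglue _ _ y).2 fun x hx => ?_
    have hTx : Tf x = (fun _ => Tf x ⟨x, Finset.mem_singleton_self x⟩ :
        Sec ({x} : Finset X) O) := by
      funext z
      have hz : z = ⟨x, Finset.mem_singleton_self x⟩ :=
        Subtype.ext (Finset.mem_singleton.mp z.2)
      rw [hz]
    have hTy := hTf x
    rw [hTx] at hTy
    exact hTy
  -- derive a global distribution, contradicting probabilistic contextuality
  apply h
  refine ⟨fun s => mu' (G s), fun s => hext.nonneg _ (hGmem s), ?_, ?_⟩
  · have hA := hAS.addNull (Finset.univ : Finset (X → O)) G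
      (fun s _ => hGmem s) (fun s _ s' _ hss => hGnull s s' hss)
    have hUmem : (⋃ s ∈ (Finset.univ : Finset (X → O)), G s) ∈ Sigma' :=
      hAS.biUnion_mem _ _ fun s _ => hGmem s
    have hsubR : (⋂ x ∈ (Finset.univ : Finset X),
        ⋃ t : Sec ({x} : Finset X) O, W.Ebar {x} t)
        ⊆ ⋃ s ∈ (Finset.univ : Finset (X → O)), G s := by
      intro y hy
      obtain ⟨s, hs⟩ := Set.mem_iUnion.mp (hRsub hy)
      exact Set.mem_iUnion₂.mpr ⟨s, Finset.mem_univ s, hs⟩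
    have h1 : (1 : ℝ) ≤ mu' (⋃ s ∈ (Finset.univ : Finset (X → O)), G s) := by
      rw [← hRone]
      exact hext.mono _ hRmem _ hUmem hsubR
    have h2 := hext.le_one _ hUmem
    rw [← hA]
    linarith
  · intro C hC t
    have hEmem' : W.Ebar C t ∈ Sigma' := hext.sub (hECmem C hC t)
    set T : Finset (X → O) := Finset.univ.filter (fun s => restrictGlobal s C = t)
      with hTdef
    have hU : mu' (⋃ s ∈ T, G s) = ∑ s ∈ T, mu' (G s) :=
      hAS.addNull _ _ (fun s _ => hGmem s) (fun s _ s' _ hss => hGnull s s' hss)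
    have hUmem : (⋃ s ∈ T, G s) ∈ Sigma' := hAS.biUnion_mem _ _ fun s _ => hGmem s
    have hUsub : (⋃ s ∈ T, G s) ⊆ W.Ebar C t := by
      intro y hy
      rcases Set.mem_iUnion₂.mp hy with ⟨s, hsT, hys⟩
      have hres : restrictGlobal s C = t := (Finset.mem_filter.mp hsT).2
      have hh := hGC s C hys
      rwa [hres] at hh
    have hup : mu' (⋃ s ∈ T, G s) ≤ e C t := by
      rw [← hmuEC C hC t]
      exact hext.mono _ hUmem _ hEmem' hUsub
    set Tc : Finset (X → O) := Finset.univ.filter (fun s => ¬ restrictGlobal s C = t)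
      with hTcdef
    have hNmem0 : ∀ s, G s ∩ W.Ebar C t ∈ Sigma' :=
      fun s => hAS.inter_mem (hGmem s) hEmem'
    have hN0 : mu' (⋃ s ∈ Tc, G s ∩ W.Ebar C t) = 0 :=
      hAS.biUnion_null _ _ (fun s _ => hNmem0 s)
        (fun s hs => hGCnull C hC t s (Finset.mem_filter.mp hs).2)
    have hNmem : (⋃ s ∈ Tc, G s ∩ W.Ebar C t) ∈ Sigma' :=
      hAS.biUnion_mem _ _ fun s _ => hNmem0 s
    have hcover : W.Ebar C t ∩
        (⋂ x ∈ (Finset.univ : Finset X), ⋃ u : Sec ({x} : Finset X) O, W.Ebar {x} u)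
        ⊆ (⋃ s ∈ T, G s) ∪ (⋃ s ∈ Tc, G s ∩ W.Ebar C t) := by
      rintro y ⟨hyE, hyR⟩
      obtain ⟨s, hys⟩ := Set.mem_iUnion.mp (hRsub hyR)
      by_cases hsT : restrictGlobal s C = t
      · exact Or.inl (Set.mem_iUnion₂.mpr
          ⟨s, Finset.mem_filter.mpr ⟨Finset.mem_univ s, hsT⟩, hys⟩)
      · exact Or.inr (Set.mem_iUnion₂.mpr
          ⟨s, Finset.mem_filter.mpr ⟨Finset.mem_univ s, hsT⟩, ⟨hys, hyE⟩⟩)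
    have hERmem : W.Ebar C t ∩
        (⋂ x ∈ (Finset.univ : Finset X), ⋃ u : Sec ({x} : Finset X) O, W.Ebar {x} u)
        ∈ Sigma' := hAS.inter_mem hEmem' hRmem
    have hlow : e C t ≤ mu' (W.Ebar C t ∩
        (⋂ x ∈ (Finset.univ : Finset X), ⋃ u : Sec ({x} : Finset X) O, W.Ebar {x} u)) := by
      have hig := hAS.inter_ge hEmem' hRmem
      have hle := hext.le_one _ (hext.union_mem _ hEmem' _ hRmem)
      rw [hmuEC C hC t, hRone] at hig
      linarith
    have hchain : mu' (W.Ebar C t ∩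
        (⋂ x ∈ (Finset.univ : Finset X), ⋃ u : Sec ({x} : Finset X) O, W.Ebar {x} u))
        ≤ mu' (⋃ s ∈ T, G s) := by
      have h1 := hext.mono _ hERmem _ (hext.union_mem _ hUmem _ hNmem) hcover
      have h2 := hAS.subadd hUmem hNmem
      linarith
    rw [← hU]
    linarith
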